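/- For d ≥ 6, there exists a cover of the ridges of the d-cube by d sets of ridges such that no set contains a pair of antipodal (d-3)-faces; consequently the guaranteed antipodality dimension k(d) = d-4 for d-set ridge covers is sharp for d ≥ 6. -/

import Mathlib

/-!
Take `d` vertices `v_t` of `C^d` and let the `t`-th set consist of the ridges through `v_t`.
Two ridges through a common vertex whose fixed coordinates lie among the three fixed
coordinates of a peak must share a fixed coordinate, where both take the value of that
vertex; hence they cannot contain a pair of antipodal peaks. The sets cover all ridges as
soon as the vertices, read as a `d × d` Boolean matrix, show all four patterns on every
pair of columns. This holds when the columns are the indicators of `d` distinct 3-subsets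
of the rows through a common row: they meet, neither contains the other, and since `d ≥ 6`
their union (of size at most 5) misses some row. There are `(d-1).choose 2 ≥ d` such subsets.
-/

namespace Cube

/-- A face of the `d`-cube: `none` = varying coordinate (X), `some b` = fixed at `b`. -/
abbrev Face (d : ℕ) := Fin d → Option Bool

/-- `F` is a `k`-face: exactly `k` varying coordinates. -/
def IsKFace {d : ℕ} (F : Face d) (k : ℕ) : Prop :=
  (Finset.univ.filter fun i => F i = none).card = k

/-- `G` is a subface of `F`: `G` agrees with every fixed coordinate of `F`. -/
def Subface {d : ℕ} (G F : Face d) : Prop := ∀ i b, F i = some b → G i = some b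

/-- Antipodal faces: same varying positions, opposite fixed values. -/
def Antipodal {d : ℕ} (F G : Face d) : Prop := ∀ i, G i = (F i).map (!·)

abbrev Vertex (d : ℕ) := Fin d → Bool

/-- The vertex `v` lies on the face `F`. -/
def VMem {d : ℕ} (v : Vertex d) (F : Face d) : Prop := ∀ i b, F i = some b → v i = b

/-- A set of faces contains the face `G` if `G` is a subface of one of its members. -/
def SetContains {d : ℕ} (A : Set (Face d)) (G : Face d) : Prop := ∃ F ∈ A, Subface G F

end Cube

namespace Cube

open Finset

variable {d : ℕ}

def fixedCoords (F : Face d) : Finset (Fin d) := univ.filter fun i => F i ≠ none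

lemma mem_fixedCoords {F : Face d} {i : Fin d} : i ∈ fixedCoords F ↔ F i ≠ none := by
  simp [fixedCoords]

lemma card_fixedCoords {F : Face d} {k : ℕ} (h : IsKFace F k) : #(fixedCoords F) = d - k := by
  have hsplit := card_filter_add_card_filter_not (s := (univ : Finset (Fin d)))
    (p := fun i => F i = none)
  rw [card_univ, Fintype.card_fin] at hsplit
  unfold IsKFace at h
  unfold fixedCoords
  simp only [ne_eq]
  omega

lemma Subface.fixedCoords_subset {F G : Face d} (h : Subface G F) :
    fixedCoords F ⊆ fixedCoords G := by
  intro i hi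
  obtain ⟨b, hb⟩ := Option.ne_none_iff_exists'.mp (mem_fixedCoords.mp hi)
  simp [mem_fixedCoords, h i b hb]

lemma Antipodal.fixedCoords_eq {F G : Face d} (h : Antipodal F G) :
    fixedCoords G = fixedCoords F := by
  ext i
  simp [mem_fixedCoords, h i]

lemma VMem.eq_some {v : Vertex d} {F : Face d} (h : VMem v F) {i : Fin d}
    (hi : i ∈ fixedCoords F) : F i = some (v i) := by
  obtain ⟨b, hb⟩ := Option.ne_none_iff_exists'.mp (mem_fixedCoords.mp hi)
  rw [hb, h i b hb]

lemma vMem_of_forall_fixedCoords {v : Vertex d} {F : Face d}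
    (h : ∀ i ∈ fixedCoords F, F i = some (v i)) : VMem v F := by
  intro i b hb
  have hi : i ∈ fixedCoords F := mem_fixedCoords.mpr (by simp [hb])
  exact (by simpa [hb] using h i hi : b = v i).symm

lemma card_fixedCoords_add_le_of_antipodal {v : Vertex d} {P P' R R' : Face d}
    (hR : VMem v R) (hR' : VMem v R') (hPR : Subface P R) (hPR' : Subface P' R')
    (hA : Antipodal P P') :
    #(fixedCoords R) + #(fixedCoords R') ≤ #(fixedCoords P) := by
  by_contra! hlt
  have hsub' : fixedCoords R' ⊆ fixedCoords P := hA.fixedCoords_eq ▸ hPR'.fixedCoords_subset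
  obtain ⟨k, hk⟩ := inter_nonempty_of_card_lt_card_add_card hPR.fixedCoords_subset hsub' hlt
  rw [mem_inter] at hk
  have hPk : P k = some (v k) := hPR k _ (hR.eq_some hk.1)
  have hP'k : P' k = some (v k) := hPR' k _ (hR'.eq_some hk.2)
  simpa [hPk, hP'k] using hA k

def ridgesThrough (v : Vertex d) : Set (Face d) := {R | IsKFace R (d - 2) ∧ VMem v R}

lemma not_antipodal_peaks_ridgesThrough (hd : 3 ≤ d) (v : Vertex d) :
    ¬ ∃ P P' : Face d, IsKFace P (d - 3) ∧ Antipodal P P' ∧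
      SetContains (ridgesThrough v) P ∧ SetContains (ridgesThrough v) P' := by
  rintro ⟨P, P', hP, hA, ⟨R, ⟨hRk, hRv⟩, hPR⟩, ⟨R', ⟨hRk', hRv'⟩, hPR'⟩⟩
  have hcard := card_fixedCoords_add_le_of_antipodal hRv hRv' hPR hPR' hA
  rw [card_fixedCoords hP, card_fixedCoords hRk, card_fixedCoords hRk'] at hcard
  omega

/-- The family of vertices, viewed as subsets of the coordinates, shatters every pair. -/
def ShattersPairs {τ : Type*} (V : τ → Vertex d) : Prop :=
  ∀ i j : Fin d, i ≠ j → ∀ b c : Bool, ∃ t, V t i = b ∧ V t j = c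

lemma ShattersPairs.exists_vMem (hd : 2 ≤ d) {τ : Type*} {V : τ → Vertex d}
    (hV : ShattersPairs V) {R : Face d} (hR : IsKFace R (d - 2)) : ∃ t, VMem (V t) R := by
  have htwo : #(fixedCoords R) = 2 := by
    rw [card_fixedCoords hR]
    omega
  obtain ⟨i, j, hij, hfix⟩ := card_eq_two.mp htwo
  have hi : i ∈ fixedCoords R := by simp [hfix]
  have hj : j ∈ fixedCoords R := by simp [hfix]
  obtain ⟨b, hb⟩ := Option.ne_none_iff_exists'.mp (mem_fixedCoords.mp hi)
  obtain ⟨c, hc⟩ := Option.ne_none_iff_exists'.mp (mem_fixedCoords.mp hj)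
  obtain ⟨t, hti, htj⟩ := hV i j hij b c
  refine ⟨t, vMem_of_forall_fixedCoords fun k hk => ?_⟩
  rw [hfix, mem_insert, mem_singleton] at hk
  rcases hk with rfl | rfl
  · rw [hb, hti]
  · rw [hc, htj]

end Cube

open Cube Finset

lemma exists_mem_notMem_of_ne_of_card_eq {α : Type*} {s t : Finset α} (hst : s ≠ t)
    (hcard : #s = #t) : ∃ x ∈ s, x ∉ t :=
  not_subset.mp fun hsub => hst (eq_of_subset_of_card_le hsub hcard.ge)

lemma shattersPairs_of_card_eq_three {α : Type*} [Fintype α] [DecidableEq α] {d : ℕ}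
    (hα : 6 ≤ Fintype.card α) {S : Fin d → Finset α} (hS : Function.Injective S) {a : α}
    (haS : ∀ i, a ∈ S i ∧ #(S i) = 3) :
    ShattersPairs fun (t : α) (i : Fin d) => decide (t ∈ S i) := by
  intro i j hij b c
  obtain ⟨hai, hi3⟩ := haS i
  obtain ⟨haj, hj3⟩ := haS j
  have hne : S i ≠ S j := hS.ne hij
  cases b <;> cases c
  · have hunion : #(S i ∪ S j) < #(univ : Finset α) := by
      have := card_union_add_card_inter (S i) (S j)
      have := card_pos.mpr ⟨a, mem_inter.mpr ⟨hai, haj⟩⟩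
      rw [card_univ]
      omega
    obtain ⟨t, -, ht⟩ := exists_mem_notMem_of_card_lt_card hunion
    exact ⟨t, by simpa [not_or] using ht⟩
  · obtain ⟨t, htj, hti⟩ := exists_mem_notMem_of_ne_of_card_eq hne.symm (hj3.trans hi3.symm)
    exact ⟨t, by simp [hti, htj]⟩
  · obtain ⟨t, hti, htj⟩ := exists_mem_notMem_of_ne_of_card_eq hne (hi3.trans hj3.symm)
    exact ⟨t, by simp [hti, htj]⟩
  · exact ⟨a, by simp [hai, haj]⟩

/-- The sets are `insert a e` for `e` among the 2-subsets of the remaining elements. -/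
lemma exists_injective_triples_through {α : Type*} [Fintype α] [DecidableEq α] (a : α)
    {n : ℕ} (hn : n ≤ (Fintype.card α - 1).choose 2) :
    ∃ S : Fin n → Finset α, Function.Injective S ∧ ∀ i, a ∈ S i ∧ #(S i) = 3 := by
  set pairs := powersetCard 2 (univ.erase a)
  have hpairs : n ≤ Fintype.card pairs := by
    rwa [Fintype.card_coe, card_powersetCard, card_erase_of_mem (mem_univ a), card_univ]
  obtain ⟨e⟩ : Nonempty (Fin n ↪ pairs) :=
    Function.Embedding.nonempty_of_card_le (by rwa [Fintype.card_fin])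
  have hae : ∀ i, a ∉ (e i : Finset α) ∧ #(e i : Finset α) = 2 := fun i => by
    obtain ⟨hsub, hcard⟩ := mem_powersetCard.mp (e i).2
    exact ⟨fun ha => by simpa using hsub ha, hcard⟩
  refine ⟨fun i => insert a (e i), fun i j hij => e.injective (Subtype.ext ?_), fun i => ?_⟩
  · simpa [erase_insert (hae i).1, erase_insert (hae j).1] using congrArg (erase · a) hij
  · simp [card_insert_of_notMem (hae i).1, (hae i).2]

lemma le_choose_two_pred {d : ℕ} (hd : 5 ≤ d) : d ≤ (d - 1).choose 2 := by
  rw [Nat.choose_two_right, Nat.le_div_iff_mul_le two_pos]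
  obtain ⟨m, rfl⟩ := Nat.exists_eq_add_of_le hd
  simp only [show 5 + m - 1 = m + 4 by omega, show m + 4 - 1 = m + 3 by omega]
  nlinarith

/-- for `d ≥ 6`, there is a `d`-set ridge cover of `C^d` in which no
set contains a pair of antipodal `(d-3)`-faces (peaks); hence `k(d) = d - 4` is
sharp for `d ≥ 6`. -/
theorem sharpness_d_ge_six (d : ℕ) (hd : 6 ≤ d) :
    ∃ A : Fin d → Set (Face d),
      (∀ i R, R ∈ A i → IsKFace R (d - 2)) ∧
      (∀ R : Face d, IsKFace R (d - 2) → ∃ i, R ∈ A i) ∧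
      (∀ i, ¬ ∃ P P' : Face d, IsKFace P (d - 3) ∧ Antipodal P P' ∧
        SetContains (A i) P ∧ SetContains (A i) P') := by
  obtain ⟨S, hS, haS⟩ := exists_injective_triples_through (⟨0, by omega⟩ : Fin d)
    (by simpa using le_choose_two_pred (by omega : 5 ≤ d))
  have hV := shattersPairs_of_card_eq_three (by rwa [Fintype.card_fin]) hS haS
  refine ⟨fun t => ridgesThrough fun i => decide (t ∈ S i), fun _ _ hR => hR.1, fun R hR => ?_,
    fun t => not_antipodal_peaks_ridgesThrough (by omega) _⟩
  obtain ⟨t, ht⟩ := hV.exists_vMem (by omega) hR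
  exact ⟨t, hR, ht⟩
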